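/- arXiv:1505.07214 — 2 statements merged into one kernel-verified Lean document; each statement's English description precedes it below -/
import Mathlib

section
/- (Gagliardo–Nirenberg inequality in the whole space.) There exists a constant C > 0 such that for every p with 2 ≤ p ≤ 6 and every continuously differentiable, compactly supported function u : ℝ³ → ℝ, one has ‖u‖_{L^p(ℝ³)} ≤ C · ‖u‖_{L²(ℝ³)}^{(3/p − 1/2)} · ‖∇u‖_{L²(ℝ³)}^{(3/2 − 3/p)}. -/
open MeasureTheory
open scoped ENNReal BigOperators

noncomputable section

/-- Euclidean space ℝ³. -/
abbrev E3 : Type := EuclideanSpace ℝ (Fin 3)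

/-- The fundamental domain [0,1)³ of the torus 𝕋³ = (ℝ/ℤ)³. -/
def T3 : Set E3 := (WithLp.equiv 2 (Fin 3 → ℝ)) ⁻¹' (Set.univ.pi fun _ => Set.Ico (0:ℝ) 1)

/-- ℤ³-periodicity: encodes that a function on ℝ³ descends to the torus 𝕋³. -/
def Torus3Periodic {F : Type*} (f : E3 → F) : Prop :=
  ∀ (x : E3) (k : Fin 3 → ℤ),
    f (x + (WithLp.equiv 2 (Fin 3 → ℝ)).symm (fun i => (k i : ℝ))) = f x

/-- The Haar measure of the torus 𝕋³ (total mass 1), realized as Lebesgue measure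
restricted to the fundamental domain. -/
def μT : Measure E3 := volume.restrict T3

/-- The i-th partial derivative of a scalar function on ℝ³. -/
def pd (i : Fin 3) (f : E3 → ℝ) (x : E3) : ℝ :=
  fderiv ℝ f x (EuclideanSpace.single i (1:ℝ))

/-! Hölder's inequality interpolates the `L^p` norm between the `L²` and `L⁶` norms with
weights `3/p - 1/2` and `3/2 - 3/p`, and the Gagliardo–Nirenberg–Sobolev inequality bounds the
`L⁶` norm of a compactly supported `C¹` function on ℝ³ by a multiple `K` of the `L²` norm of its
derivative. Since the second weight lies in `[0, 1]`, `K` raised to it is at most `max K 1`. -/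

open scoped NNReal

theorem ENNReal.rpow_le_max_one {x : ℝ≥0∞} {θ : ℝ} (hθ₀ : 0 ≤ θ) (hθ₁ : θ ≤ 1) :
    x ^ θ ≤ max x 1 := by
  rcases le_total x 1 with hx | hx
  · exact (ENNReal.rpow_le_one hx hθ₀).trans (le_max_right _ _)
  · calc x ^ θ ≤ x ^ (1 : ℝ) := ENNReal.rpow_le_rpow_of_exponent_le hx hθ₁
      _ = x := ENNReal.rpow_one x
      _ ≤ max x 1 := le_max_left _ _

theorem pos_of_one_div_eq_convex_comb {p₀ p₁ p θ : ℝ} (hp₀ : 0 < p₀) (hp₁ : 0 < p₁)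
    (hθ₀ : 0 ≤ θ) (hθ₁ : θ ≤ 1) (hp : 1 / p = (1 - θ) / p₀ + θ / p₁) : 0 < p := by
  refine one_div_pos.mp (hp ▸ ?_)
  rcases hθ₀.eq_or_lt with rfl | hθ
  · simpa using hp₀
  · exact add_pos_of_nonneg_of_pos (div_nonneg (by linarith) hp₀.le) (div_pos hθ hp₁)

section Interpolation

variable {α F : Type*} [MeasurableSpace α] [NormedAddCommGroup F] {μ : Measure α}

theorem eLpNorm_ofReal_eq_eLpNorm' (f : α → F) {q : ℝ} (hq : 0 < q) :
    eLpNorm f (ENNReal.ofReal q) μ = eLpNorm' f q μ := by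
  rw [eLpNorm_eq_eLpNorm' (by simpa using hq) ENNReal.ofReal_ne_top, ENNReal.toReal_ofReal hq.le]

theorem eLpNorm'_le_eLpNorm'_rpow_mul_eLpNorm'_rpow {f : α → F}
    (hf : AEStronglyMeasurable f μ) {p₀ p₁ p θ : ℝ} (hp₀ : 0 < p₀) (hp₁ : 0 < p₁)
    (hθ₀ : 0 ≤ θ) (hθ₁ : θ ≤ 1) (hp : 1 / p = (1 - θ) / p₀ + θ / p₁) :
    eLpNorm' f p μ ≤ eLpNorm' f p₀ μ ^ (1 - θ) * eLpNorm' f p₁ μ ^ θ := by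
  have hp_pos := pos_of_one_div_eq_convex_comb hp₀ hp₁ hθ₀ hθ₁ hp
  set a := (1 - θ) * p / p₀
  set b := θ * p / p₁
  have hab : a + b = 1 := by
    simp only [a, b, mul_div_right_comm _ p, ← add_mul, ← hp]
    field_simp
  have hmix : ∀ x, (‖f x‖ₑ ^ p₀) ^ a * (‖f x‖ₑ ^ p₁) ^ b = ‖f x‖ₑ ^ p := by
    intro x
    rw [← ENNReal.rpow_mul, ← ENNReal.rpow_mul,
      ← ENNReal.rpow_add_of_nonneg _ _ (by positivity) (by positivity)]
    congr 1
    simp only [a, b]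
    field_simp
    ring
  have holder := ENNReal.lintegral_mul_norm_pow_le (μ := μ)
    (hf.enorm.pow_const p₀) (hf.enorm.pow_const p₁) (by positivity) (by positivity) hab
  simp only [hmix] at holder
  simp only [eLpNorm'_eq_lintegral_enorm]
  calc (∫⁻ x, ‖f x‖ₑ ^ p ∂μ) ^ (1 / p)
      ≤ ((∫⁻ x, ‖f x‖ₑ ^ p₀ ∂μ) ^ a * (∫⁻ x, ‖f x‖ₑ ^ p₁ ∂μ) ^ b) ^ (1 / p) := by
        gcongr
    _ = _ := by
        rw [ENNReal.mul_rpow_of_nonneg _ _ (by positivity), ← ENNReal.rpow_mul,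
          ← ENNReal.rpow_mul, ← ENNReal.rpow_mul, ← ENNReal.rpow_mul]
        congr 2 <;> simp only [a, b] <;> field_simp

theorem eLpNorm_ofReal_le_eLpNorm_ofReal_rpow_mul_eLpNorm_ofReal_rpow {f : α → F}
    (hf : AEStronglyMeasurable f μ) {p₀ p₁ p θ : ℝ} (hp₀ : 0 < p₀) (hp₁ : 0 < p₁)
    (hθ₀ : 0 ≤ θ) (hθ₁ : θ ≤ 1) (hp : 1 / p = (1 - θ) / p₀ + θ / p₁) :
    eLpNorm f (ENNReal.ofReal p) μ ≤
      eLpNorm f (ENNReal.ofReal p₀) μ ^ (1 - θ) * eLpNorm f (ENNReal.ofReal p₁) μ ^ θ := by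
  rw [eLpNorm_ofReal_eq_eLpNorm' f hp₀, eLpNorm_ofReal_eq_eLpNorm' f hp₁,
    eLpNorm_ofReal_eq_eLpNorm' f (pos_of_one_div_eq_convex_comb hp₀ hp₁ hθ₀ hθ₁ hp)]
  exact eLpNorm'_le_eLpNorm'_rpow_mul_eLpNorm'_rpow hf hp₀ hp₁ hθ₀ hθ₁ hp

end Interpolation

theorem eLpNorm_six_le_eLpNorm_fderiv_two {E F : Type*} [NormedAddCommGroup E]
    [NormedSpace ℝ E] [MeasurableSpace E] [BorelSpace E] [FiniteDimensional ℝ E]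
    [NormedAddCommGroup F] [InnerProductSpace ℝ F] (μ : Measure E) [μ.IsAddHaarMeasure]
    (hE : Module.finrank ℝ E = 3) {u : E → F} (hu : ContDiff ℝ 1 u) (h2u : HasCompactSupport u) :
    eLpNorm u 6 μ ≤ eLpNormLESNormFDerivOfEqInnerConst μ 2 * eLpNorm (fderiv ℝ u) 2 μ := by
  have := eLpNorm_le_eLpNorm_fderiv_of_eq_inner μ hu h2u (p := 2) (p' := 6) (by norm_num)
    (by omega) (by rw [hE]; norm_num)
  exact_mod_cast this

/-- **Gagliardo–Nirenberg inequality in the whole space ℝ³.**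
There is `C > 0` such that for all `2 ≤ p ≤ 6` and all `u ∈ C¹_c(ℝ³)`,
`‖u‖_{L^p} ≤ C ‖u‖_{L²}^{3/p − 1/2} ‖∇u‖_{L²}^{3/2 − 3/p}`. -/
theorem gagliardo_nirenberg_whole_space :
    ∃ C : ℝ, 0 < C ∧ ∀ (p : ℝ), 2 ≤ p → p ≤ 6 →
      ∀ u : E3 → ℝ, ContDiff ℝ 1 u → HasCompactSupport u →
        eLpNorm u (ENNReal.ofReal p) volume ≤
          ENNReal.ofReal C * eLpNorm u 2 volume ^ (3/p - 1/2)
            * eLpNorm (fun x => ‖fderiv ℝ u x‖) 2 volume ^ (3/2 - 3/p) := by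
  set K : ℝ≥0 := eLpNormLESNormFDerivOfEqInnerConst (volume : Measure E3) 2
  refine ⟨max K 1, by positivity, fun p h2 h6 u hu h2u => ?_⟩
  have hθ₀ : 0 ≤ 3/2 - 3/p := by rw [sub_nonneg, div_le_div_iff₀] <;> linarith
  have hθ₁ : 3/2 - 3/p ≤ 1 := by rw [sub_le_comm, le_div_iff₀] <;> linarith
  have hinterp := eLpNorm_ofReal_le_eLpNorm_ofReal_rpow_mul_eLpNorm_ofReal_rpow
    hu.continuous.aestronglyMeasurable (μ := volume) (p := p) two_pos (by norm_num : (0 : ℝ) < 6)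
    hθ₀ hθ₁ (by field_simp; ring)
  rw [show 1 - (3/2 - 3/p) = 3/p - 1/2 by ring, ENNReal.ofReal_ofNat, ENNReal.ofReal_ofNat]
    at hinterp
  calc eLpNorm u (ENNReal.ofReal p) volume
      ≤ eLpNorm u 2 volume ^ (3/p - 1/2) * eLpNorm u 6 volume ^ (3/2 - 3/p) := hinterp
    _ ≤ eLpNorm u 2 volume ^ (3/p - 1/2)
          * (K * eLpNorm (fderiv ℝ u) 2 volume) ^ (3/2 - 3/p) := by
        gcongr
        exact eLpNorm_six_le_eLpNorm_fderiv_two volume finrank_euclideanSpace_fin hu h2u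
    _ ≤ eLpNorm u 2 volume ^ (3/p - 1/2)
          * (max (K : ℝ≥0∞) 1 * eLpNorm (fderiv ℝ u) 2 volume ^ (3/2 - 3/p)) := by
        rw [ENNReal.mul_rpow_of_nonneg _ _ hθ₀]
        gcongr
        exact ENNReal.rpow_le_max_one hθ₀ hθ₁
    _ = _ := by
        rw [eLpNorm_norm, ENNReal.ofReal_max, ENNReal.ofReal_coe_nnreal, ENNReal.ofReal_one]
        ring
end
end

section
/- (Gronwall-type lemma.) Let f and g be nonnegative continuous functions on [0, ∞), with f differentiable, satisfying (1/2) d/dt (f(t)²) ≤ f(t) g(t) for all t ≥ 0. Then for every t ≥ 0 one has f(t) ≤ f(0) + ∫₀ᵗ g(t′) dt′. -/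
/-!
One cannot divide `f f' ≤ f g` by `f` where `f` vanishes, so differentiate the regularization
`√(f² + ε²)` instead: its derivative `f f' / √(f² + ε²)` is at most `g`, because
`|f| ≤ √(f² + ε²)` and `g ≥ 0`. Integrating and letting `ε → 0` gives
`|f(t)| ≤ |f(0)| + ∫₀ᵗ g`.
-/

open MeasureTheory Set

theorem Real.sqrt_sq_add_sq_le_abs_add (x : ℝ) {ε : ℝ} (hε : 0 ≤ ε) :
    √(x ^ 2 + ε ^ 2) ≤ |x| + ε := by
  rw [Real.sqrt_le_left (by positivity)]
  nlinarith [abs_nonneg x, sq_abs x]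

theorem HasDerivAt.sqrt_sq_add_sq {f : ℝ → ℝ} {f' x ε : ℝ} (hf : HasDerivAt f f' x)
    (hε : ε ≠ 0) :
    HasDerivAt (fun s => √(f s ^ 2 + ε ^ 2)) (f x * f' / √(f x ^ 2 + ε ^ 2)) x := by
  have hpos : 0 < f x ^ 2 + ε ^ 2 := by positivity
  convert ((hf.fun_pow 2).add_const (ε ^ 2)).sqrt hpos.ne' using 1
  field_simp
  ring

theorem sqrt_sq_add_sq_sub_le_integral_of_mul_deriv_le {f f' g : ℝ → ℝ} {a b ε : ℝ}
    (hab : a ≤ b) (hε : ε ≠ 0) (hf : ∀ x ∈ Icc a b, HasDerivAt f (f' x) x)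
    (hg0 : ∀ x ∈ Ioo a b, 0 ≤ g x) (hg : IntegrableOn g (Icc a b))
    (hfg : ∀ x ∈ Ioo a b, f x * f' x ≤ f x * g x) :
    √(f b ^ 2 + ε ^ 2) - √(f a ^ 2 + ε ^ 2) ≤ ∫ x in a..b, g x := by
  refine intervalIntegral.sub_le_integral_of_hasDeriv_right_of_le hab
    (fun x hx => ((hf x hx).sqrt_sq_add_sq hε).continuousAt.continuousWithinAt)
    (fun x hx => ((hf x (Ioo_subset_Icc_self hx)).sqrt_sq_add_sq hε).hasDerivWithinAt) hg
    fun x hx => ?_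
  have hr : 0 < √(f x ^ 2 + ε ^ 2) := Real.sqrt_pos.2 (by positivity)
  rw [div_le_iff₀ hr]
  calc f x * f' x ≤ f x * g x := hfg x hx
    _ ≤ |f x| * g x := mul_le_mul_of_nonneg_right (le_abs_self _) (hg0 x hx)
    _ ≤ √(f x ^ 2 + ε ^ 2) * g x :=
      mul_le_mul_of_nonneg_right (Real.abs_le_sqrt (le_add_of_nonneg_right (sq_nonneg ε)))
        (hg0 x hx)
    _ = g x * √(f x ^ 2 + ε ^ 2) := mul_comm _ _

theorem abs_le_abs_add_integral_of_mul_deriv_le {f f' g : ℝ → ℝ} {a b : ℝ} (hab : a ≤ b)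
    (hf : ∀ x ∈ Icc a b, HasDerivAt f (f' x) x) (hg0 : ∀ x ∈ Ioo a b, 0 ≤ g x)
    (hg : IntegrableOn g (Icc a b)) (hfg : ∀ x ∈ Ioo a b, f x * f' x ≤ f x * g x) :
    |f b| ≤ |f a| + ∫ x in a..b, g x := by
  refine le_of_forall_pos_le_add fun ε hε => ?_
  have h := sqrt_sq_add_sq_sub_le_integral_of_mul_deriv_le hab hε.ne' hf hg0 hg hfg
  calc |f b| ≤ √(f b ^ 2 + ε ^ 2) := Real.abs_le_sqrt (le_add_of_nonneg_right (sq_nonneg ε))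
    _ ≤ √(f a ^ 2 + ε ^ 2) + ∫ x in a..b, g x := by linarith
    _ ≤ |f a| + ε + ∫ x in a..b, g x := by
      gcongr
      exact Real.sqrt_sq_add_sq_le_abs_add _ hε.le
    _ = |f a| + (∫ x in a..b, g x) + ε := by ring

theorem gronwall_lemma_general (f g : ℝ → ℝ)
    (hf0 : ∀ t, 0 ≤ t → 0 ≤ f t) (hg0 : ∀ t, 0 ≤ t → 0 ≤ g t)
    (hgc : ContinuousOn g (Set.Ici 0))
    (hfd : ∀ t, 0 ≤ t → DifferentiableAt ℝ f t)
    (hineq : ∀ t, 0 ≤ t → (1/2) * deriv (fun s => f s ^ 2) t ≤ f t * g t) :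
    ∀ t, 0 ≤ t → f t ≤ f 0 + ∫ s in (0:ℝ)..t, g s := by
  intro t ht
  have hfg : ∀ s ∈ Ioo 0 t, f s * deriv f s ≤ f s * g s := fun s hs => by
    have h := hineq s hs.1.le
    rw [((hfd s hs.1.le).hasDerivAt.fun_pow 2).deriv] at h
    linarith
  calc f t ≤ |f t| := le_abs_self _
    _ ≤ |f 0| + ∫ s in (0:ℝ)..t, g s :=
      abs_le_abs_add_integral_of_mul_deriv_le ht (fun s hs => (hfd s hs.1).hasDerivAt)
        (fun s hs => hg0 s hs.1.le)
        ((hgc.mono Icc_subset_Ici_self).integrableOn_compact isCompact_Icc) hfg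
    _ = f 0 + ∫ s in (0:ℝ)..t, g s := by rw [abs_of_nonneg (hf0 0 le_rfl)]

/-- **Gronwall-type lemma.**
If `f, g ≥ 0` are continuous on `[0,∞)`, `f` is differentiable there, and
`(1/2) (f²)′(t) ≤ f(t) g(t)` for `t ≥ 0`, then `f(t) ≤ f(0) + ∫₀ᵗ g`. -/
theorem gronwall_lemma (f g : ℝ → ℝ)
    (hf0 : ∀ t, 0 ≤ t → 0 ≤ f t) (hg0 : ∀ t, 0 ≤ t → 0 ≤ g t)
    (hfc : ContinuousOn f (Set.Ici 0)) (hgc : ContinuousOn g (Set.Ici 0))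
    (hfd : ∀ t, 0 ≤ t → DifferentiableAt ℝ f t)
    (hineq : ∀ t, 0 ≤ t → (1/2) * deriv (fun s => f s ^ 2) t ≤ f t * g t) :
    ∀ t, 0 ≤ t → f t ≤ f 0 + ∫ s in (0:ℝ)..t, g s :=
  gronwall_lemma_general f g hf0 hg0 hgc hfd hineq
end
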